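/- arXiv:1006.2921 — 5 statements merged into one kernel-verified Lean document; each statement's English description precedes it below -/
import Mathlib

section
/- Let n be a natural number and let a system of integer inequality constraints over variables x_1, ..., x_n be given, where each constraint has the form u ≤ w with u, w each being either a variable x_i or an integer constant. Let C ⊆ ℤ be a finite set containing all integer constants occurring in the constraints, and let χ be an integer strictly greater than every element of C. If there exists an assignment v : Fin n → ℤ satisfying all constraints, then there exists an assignment v' : Fin n → ℤ satisfying all constraints such that v'(i) ∈ C ∪ {χ} for every i. -/
/-- Evaluation of a variable-or-constant under an assignment. -/
def evalAtom {n : ℕ} (v : Fin n → ℤ) : (Fin n ⊕ ℤ) → ℤ := Sum.elim v id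

/-- An assignment satisfies a finite system of inequality constraints. -/
def Sat {n : ℕ} (S : Finset ((Fin n ⊕ ℤ) × (Fin n ⊕ ℤ))) (v : Fin n → ℤ) : Prop :=
  ∀ p ∈ S, evalAtom v p.1 ≤ evalAtom v p.2

theorem stmt0 {n : ℕ} (S : Finset ((Fin n ⊕ ℤ) × (Fin n ⊕ ℤ)))
    (C : Finset ℤ)
    (hC : ∀ p ∈ S, ∀ c : ℤ, (p.1 = Sum.inr c ∨ p.2 = Sum.inr c) → c ∈ C)
    (χ : ℤ) (hχ : ∀ c ∈ C, c < χ)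
    (hsat : ∃ v : Fin n → ℤ, Sat S v) :
    ∃ v' : Fin n → ℤ, Sat S v' ∧ ∀ i, v' i ∈ C ∨ v' i = χ := by
  obtain ⟨v, hv⟩ := hsat
  classical
  set f : ℤ → ℤ := fun t =>
    if h : (C.filter (fun c => t ≤ c)).Nonempty then (C.filter (fun c => t ≤ c)).min' h
    else χ with hf
  -- f t ∈ C ∪ {χ}
  have hmem : ∀ t, f t ∈ C ∨ f t = χ := by
    intro t
    by_cases h : (C.filter (fun c => t ≤ c)).Nonempty
    · left
      simp only [hf, dif_pos h]
      have := Finset.min'_mem _ h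
      exact (Finset.mem_filter.mp this).1
    · right; simp [hf, dif_neg h]
  -- t ≤ c, c ∈ C ⇒ f t ≤ c
  have hle : ∀ t c, c ∈ C → t ≤ c → f t ≤ c := by
    intro t c hc htc
    have hmemf : c ∈ C.filter (fun c => t ≤ c) := Finset.mem_filter.mpr ⟨hc, htc⟩
    have h : (C.filter (fun c => t ≤ c)).Nonempty := ⟨c, hmemf⟩
    simp only [hf, dif_pos h]
    exact Finset.min'_le _ _ hmemf
  -- c ≤ t, c ∈ C ⇒ c ≤ f t
  have hge : ∀ t c, c ∈ C → c ≤ t → c ≤ f t := by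
    intro t c hc hct
    by_cases h : (C.filter (fun c => t ≤ c)).Nonempty
    · simp only [hf, dif_pos h]
      have := Finset.min'_mem _ h
      exact hct.trans (Finset.mem_filter.mp this).2
    · simp only [hf, dif_neg h]
      exact (hχ c hc).le
  -- monotone
  have hmono : ∀ s t, s ≤ t → f s ≤ f t := by
    intro s t hst
    by_cases h : (C.filter (fun c => t ≤ c)).Nonempty
    · have h2 : f t ∈ C.filter (fun c => t ≤ c) := by
        simp only [hf, dif_pos h]
        exact Finset.min'_mem _ _
      obtain ⟨hftC, htft⟩ := Finset.mem_filter.mp h2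
      exact hle s (f t) hftC (hst.trans htft)
    · simp only [hf, dif_neg h]
      rcases hmem s with h1 | h1
      · exact (hχ _ h1).le
      · exact h1.le
  refine ⟨fun i => f (v i), ?_, fun i => hmem (v i)⟩
  intro p hp
  have hvp := hv p hp
  rcases p with ⟨u, w⟩
  rcases u with i | c <;> rcases w with j | d <;> simp only [evalAtom, Sum.elim_inl, Sum.elim_inr, id] at hvp ⊢
  · exact hmono _ _ hvp
  · exact hle _ _ (hC _ hp d (Or.inr rfl)) hvp
  · exact hge _ _ (hC _ hp c (Or.inl rfl)) hvp
  · exact hvp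
end

section
/- A dual (lower-bound) instantiation theorem: for a finite system of integer inequality constraints over variables x_1, ..., x_n (each constraint of the form u ≤ w with u, w variables or integer constants), with all constants contained in a finite set C ⊆ ℤ and χ an integer strictly smaller than every element of C, if the system is satisfiable over ℤ then it is satisfiable by an assignment with all values in C ∪ {χ}. -/
theorem stmt3 {n : ℕ} (S : Finset ((Fin n ⊕ ℤ) × (Fin n ⊕ ℤ)))
    (C : Finset ℤ)
    (hC : ∀ p ∈ S, ∀ c : ℤ, (p.1 = Sum.inr c ∨ p.2 = Sum.inr c) → c ∈ C)
    (χ : ℤ) (hχ : ∀ c ∈ C, χ < c)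
    (hsat : ∃ v : Fin n → ℤ, Sat S v) :
    ∃ v' : Fin n → ℤ, Sat S v' ∧ ∀ i, v' i ∈ C ∨ v' i = χ := by
  obtain ⟨v, hv⟩ := hsat
  classical
  set f : ℤ → ℤ := fun x =>
    if h : (C.filter (· ≤ x)).Nonempty then (C.filter (· ≤ x)).max' h else χ with hf
  -- key properties of f
  have hmem : ∀ x, f x ∈ C ∨ f x = χ := by
    intro x
    by_cases h : (C.filter (· ≤ x)).Nonempty
    · left
      simp only [hf, dif_pos h]
      have := (C.filter (· ≤ x)).max'_mem h
      exact (Finset.mem_filter.mp this).1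
    · right; simp [hf, dif_neg h]
  have hle : ∀ x, (C.filter (· ≤ x)).Nonempty → f x ≤ x := by
    intro x h
    simp only [hf, dif_pos h]
    have := (C.filter (· ≤ x)).max'_mem h
    exact (Finset.mem_filter.mp this).2
  have hge : ∀ x c, c ∈ C → c ≤ x → c ≤ f x := by
    intro x c hc hcx
    have hmemf : c ∈ C.filter (· ≤ x) := by
      rw [Finset.mem_filter]; exact ⟨hc, hcx⟩
    have hne : (C.filter (· ≤ x)).Nonempty := ⟨c, hmemf⟩
    simp only [hf, dif_pos hne]
    exact Finset.le_max' _ c hmemf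
  have hmono : ∀ x y, x ≤ y → f x ≤ f y := by
    intro x y hxy
    by_cases h : (C.filter (· ≤ x)).Nonempty
    · have hm := (C.filter (· ≤ x)).max'_mem h
      have := Finset.mem_filter.mp hm
      calc f x = (C.filter (· ≤ x)).max' h := by simp [hf, dif_pos h]
        _ ≤ f y := hge y _ this.1 (this.2.trans hxy)
    · simp only [hf, dif_neg h]
      rcases hmem y with hy | hy
      · exact (hχ _ hy).le
      · exact le_of_eq hy.symm
  refine ⟨fun i => f (v i), ?_, fun i => hmem (v i)⟩
  intro p hp
  have hvp := hv p hp
  obtain ⟨a, b⟩ := p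
  rcases a with i | c <;> rcases b with j | d <;>
    simp only [evalAtom, Sum.elim_inl, Sum.elim_inr, id] at hvp ⊢
  · exact hmono _ _ hvp
  · -- v i ≤ d, d ∈ C, need f (v i) ≤ d
    have hd : d ∈ C := hC _ hp d (Or.inr rfl)
    by_cases h : (C.filter (· ≤ v i)).Nonempty
    · exact (hle _ h).trans hvp
    · simp only [hf, dif_neg h]; exact (hχ _ hd).le
  · exact hge _ _ (hC _ hp c (Or.inl rfl)) hvp
  · exact hvp
end

section
/- Let f : ℤ → α be a function, n ≥ 1, and let l, u : Fin n → ℤ and e : Fin n → α be such that: (1) for every i and every x with l i ≤ x ≤ u i, f x = e i; (2) each interval is nonempty, i.e. l i ≤ u i; (3) consecutive intervals overlap, i.e. for every i with i+1 < n, l ⟨i+1⟩ ≤ u ⟨i⟩. Then f is constant with value e 0 on the whole interval [l 0, u ⟨n-1⟩]: for every x with l 0 ≤ x ≤ u ⟨n-1⟩, f x = e 0. -/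
open Set

/-- Overlapping constancy intervals propagate the constant: if `a'` lies left of `a`, then `a` itself
lies in the second interval, otherwise `a'` lies in the first. -/
theorem forall_Icc_eq_of_overlap {α β : Type*} [LinearOrder α] {f : α → β} {a b a' b' : α}
    {c d : β} (ha : f a = c) (h : ∀ x ∈ Icc a b, f x = c) (h' : ∀ x ∈ Icc a' b', f x = d)
    (hover : a' ≤ b) : ∀ x ∈ Icc a b', f x = c := by
  rintro x ⟨hax, hxb'⟩
  rcases le_or_gt x b with hxb | hbx
  · exact h x ⟨hax, hxb⟩
  have hd : d = c := by
    rcases le_total a a' with haa' | ha'a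
    · rw [← h' a' ⟨le_rfl, hover.trans (hbx.le.trans hxb')⟩, h a' ⟨haa', hover⟩]
    · rw [← h' a ⟨ha'a, hax.trans hxb'⟩, ha]
  rw [h' x ⟨hover.trans hbx.le, hxb'⟩, hd]

theorem forall_Icc_eq_of_chain {α β : Type*} [LinearOrder α] {n : ℕ} {f : α → β}
    {l u : Fin (n + 1) → α} {e : Fin (n + 1) → β}
    (hconst : ∀ i, ∀ x ∈ Icc (l i) (u i), f x = e i) (hne : l 0 ≤ u 0)
    (hover : ∀ i : Fin n, l i.succ ≤ u i.castSucc) (i : Fin (n + 1)) :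
    ∀ x ∈ Icc (l 0) (u i), f x = e 0 := by
  induction i using Fin.induction with
  | zero => exact hconst 0
  | succ i ih =>
    exact forall_Icc_eq_of_overlap (hconst 0 _ ⟨le_rfl, hne⟩) ih (hconst i.succ) (hover i)

theorem stmt5 {α : Type*} (f : ℤ → α) (n : ℕ) (hn : 0 < n)
    (l u : Fin n → ℤ) (e : Fin n → α)
    (hconst : ∀ (i : Fin n) (x : ℤ), l i ≤ x → x ≤ u i → f x = e i)
    (hne : ∀ i : Fin n, l i ≤ u i)
    (hover : ∀ (i : Fin n) (h : i.val + 1 < n), l ⟨i.val + 1, h⟩ ≤ u i) :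
    ∀ x : ℤ, l ⟨0, hn⟩ ≤ x → x ≤ u ⟨n - 1, by omega⟩ → f x = e ⟨0, hn⟩ := by
  obtain ⟨m, rfl⟩ := Nat.exists_eq_add_one_of_ne_zero hn.ne'
  intro x hl hu
  exact forall_Icc_eq_of_chain (fun i x hx => hconst i x hx.1 hx.2) (hne 0)
    (fun i => hover i.castSucc (by simp)) (Fin.last m) x ⟨hl, hu⟩
end

section
/- For a finite system of integer inequality constraints over variables x_1,...,x_n (constraints of the form u ≤ w with u, w variables or integer constants), define for each variable i the set B_i as the least family of finite sets of integers satisfying: B_i ⊇ {c : the constraint x_i ≤ c occurs}, B_i ⊇ B_j whenever the constraint x_i ≤ x_j occurs, and χ ∈ B_i, where χ is an integer strictly greater than all constants occurring in the system. If the system is satisfiable over ℤ, then the assignment v defined by v(i) := min B_i satisfies all constraints of the system. -/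
/-- Upper-bound closure relation. -/
inductive UB {n : ℕ} (S : Finset ((Fin n ⊕ ℤ) × (Fin n ⊕ ℤ))) : Fin n → ℤ → Prop
  | base {i : Fin n} {c : ℤ} : (Sum.inl i, Sum.inr c) ∈ S → UB S i c
  | step {i j : Fin n} {c : ℤ} : (Sum.inl i, Sum.inl j) ∈ S → UB S j c → UB S i c

theorem stmt9 {n : ℕ} (S : Finset ((Fin n ⊕ ℤ) × (Fin n ⊕ ℤ)))
    (χ : ℤ)
    (hχ : ∀ p ∈ S, ∀ c : ℤ, (p.1 = Sum.inr c ∨ p.2 = Sum.inr c) → c < χ)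
    (B : Fin n → Finset ℤ)
    (hB : ∀ i, (B i : Set ℤ) = {χ} ∪ {c : ℤ | UB S i c})
    (hne : ∀ i, (B i).Nonempty)
    (hsat : ∃ v : Fin n → ℤ, Sat S v) :
    Sat S (fun i => (B i).min' (hne i)) := by
  obtain ⟨w, hw⟩ := hsat
  have ub_le : ∀ {i : Fin n} {c : ℤ}, UB S i c → w i ≤ c := by
    intro i c h
    induction h with
    | base h => exact hw _ h
    | step h _ ih => exact le_trans (hw _ h) ih
  have memB : ∀ (i : Fin n) (c : ℤ), c ∈ B i ↔ c = χ ∨ UB S i c := by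
    intro i c
    have := Set.ext_iff.mp (hB i) c
    simpa using this
  have chi_mem : ∀ i, χ ∈ B i := fun i => (memB i χ).mpr (Or.inl rfl)
  intro p hp
  rcases p with ⟨u, u'⟩
  rcases u with i | c <;> rcases u' with j | c'
  · -- x_i ≤ x_j : B j ⊆ B i
    have hsub : B j ⊆ B i := by
      intro c hc
      rcases (memB j c).mp hc with h | h
      · exact h ▸ chi_mem i
      · exact (memB i c).mpr (Or.inr (UB.step hp h))
    exact Finset.min'_le _ _ (hsub ((B j).min'_mem (hne j)))
  · -- x_i ≤ c'
    exact Finset.min'_le _ _ ((memB i c').mpr (Or.inr (UB.base hp)))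
  · -- c ≤ x_j
    refine Finset.le_min' _ (hne j) _ (fun y hy => ?_)
    rcases (memB j y).mp hy with h | h
    · have : c < χ := hχ _ hp c (Or.inl rfl)
      simpa [evalAtom, h] using this.le
    · exact le_trans (hw _ hp) (ub_le h)
  · -- c ≤ c'
    exact hw _ hp
end

section
/- Let φ₁, ..., φ_k be finite systems of integer inequality constraints over pairwise disjoint variable sets, with all constants occurring in them contained in a finite set C ⊆ ℤ, and let χ be an integer with c < χ for all c ∈ C. If at least one φᵢ is satisfiable over ℤ, then at least one φᵢ is satisfiable by an assignment taking all its values in C ∪ {χ}. -/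
noncomputable def roundC (C : Finset ℤ) (χ : ℤ) (x : ℤ) : ℤ :=
  if h : (C.filter (· ≤ x)).Nonempty then (C.filter (· ≤ x)).max' h
  else if h2 : C.Nonempty then C.min' h2 else χ

lemma roundC_mem (C : Finset ℤ) (χ : ℤ) (x : ℤ) :
    roundC C χ x ∈ C ∨ roundC C χ x = χ := by
  unfold roundC
  split_ifs with h h2
  · left; exact (Finset.mem_filter.mp ((C.filter (· ≤ x)).max'_mem h)).1
  · left; exact C.min'_mem h2
  · right; rfl

set_option maxHeartbeats 1000000 in
lemma roundC_fix (C : Finset ℤ) (χ : ℤ) {c : ℤ} (hc : c ∈ C) :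
    roundC C χ c = c := by
  have hne : (C.filter (· ≤ c)).Nonempty :=
    ⟨c, Finset.mem_filter.mpr ⟨hc, le_refl c⟩⟩
  unfold roundC
  rcases em ((C.filter (· ≤ c)).Nonempty) with h | h
  · rw [dif_pos h]
    apply le_antisymm
    · apply Finset.max'_le
      intro y hy
      exact (Finset.mem_filter.mp hy).2
    · apply Finset.le_max'
      exact Finset.mem_filter.mpr ⟨hc, le_refl c⟩
  · exact absurd hne h

set_option maxHeartbeats 1000000 in
lemma roundC_mono (C : Finset ℤ) (χ : ℤ) {x y : ℤ} (hxy : x ≤ y) :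
    roundC C χ x ≤ roundC C χ y := by
  unfold roundC
  split_ifs with h1 h2 h3 h4 h5 h6
  · -- both filters nonempty
    apply Finset.max'_le
    intro z hz
    apply Finset.le_max'
    rw [Finset.mem_filter] at hz ⊢
    exact ⟨hz.1, le_trans hz.2 hxy⟩
  · -- x-filter nonempty, y-filter empty: impossible
    exfalso
    obtain ⟨z, hz⟩ := h1
    rw [Finset.mem_filter] at hz
    exact h2 ⟨z, Finset.mem_filter.mpr ⟨hz.1, le_trans hz.2 hxy⟩⟩
  · exfalso
    obtain ⟨z, hz⟩ := h1
    rw [Finset.mem_filter] at hz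
    exact h2 ⟨z, Finset.mem_filter.mpr ⟨hz.1, le_trans hz.2 hxy⟩⟩
  · -- x-filter empty, C nonempty, y-filter nonempty
    apply Finset.min'_le
    exact (Finset.mem_filter.mp (Finset.max'_mem _ _)).1
  · exact le_refl _
  · -- C empty but y-filter nonempty: impossible
    exact absurd ⟨_, (Finset.mem_filter.mp (Finset.max'_mem _ h6)).1⟩ h4
  · exact le_refl _

theorem stmt10 {k : ℕ} (n : Fin k → ℕ)
    (φ : (i : Fin k) → Finset ((Fin (n i) ⊕ ℤ) × (Fin (n i) ⊕ ℤ)))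
    (C : Finset ℤ)
    (hC : ∀ (i : Fin k), ∀ p ∈ φ i, ∀ c : ℤ,
      (p.1 = Sum.inr c ∨ p.2 = Sum.inr c) → c ∈ C)
    (χ : ℤ) (hχ : ∀ c ∈ C, c < χ)
    (hsat : ∃ i : Fin k, ∃ v : Fin (n i) → ℤ, Sat (φ i) v) :
    ∃ (i : Fin k) (v : Fin (n i) → ℤ), Sat (φ i) v ∧ ∀ j, v j ∈ C ∨ v j = χ := by
  obtain ⟨i, v, hv⟩ := hsat
  refine ⟨i, fun j => roundC C χ (v j), ?_, fun j => roundC_mem C χ (v j)⟩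
  intro p hp
  have key : ∀ a : Fin (n i) ⊕ ℤ, (a = p.1 ∨ a = p.2) →
      evalAtom (fun j => roundC C χ (v j)) a = roundC C χ (evalAtom v a) := by
    intro a ha
    cases a with
    | inl j => rfl
    | inr c =>
      have hcC : c ∈ C := by
        rcases ha with h | h
        · exact hC i p hp c (Or.inl h.symm)
        · exact hC i p hp c (Or.inr h.symm)
      simp [evalAtom, roundC_fix C χ hcC]
  rw [key p.1 (Or.inl rfl), key p.2 (Or.inr rfl)]
  exact roundC_mono C χ (hv p hp)
end
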